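/- arXiv:2104.14760 — 6 statements merged into one kernel-verified Lean document; each statement's English description precedes it below -/
import Mathlib

section
/- The relation a ≤ b on vertices of a finite simplicial graph Γ defined by lk(a) ⊆ st(b) is transitive: if lk(a) ⊆ st(b) and lk(b) ⊆ st(c), then lk(a) ⊆ st(c). -/
/-- The relations of a right-angled Artin group: commutators of adjacent vertices. -/
def raagRels {V : Type*} (G : SimpleGraph V) : Set (FreeGroup V) :=
  {r | ∃ u v : V, G.Adj u v ∧
    r = FreeGroup.of u * FreeGroup.of v * (FreeGroup.of u)⁻¹ * (FreeGroup.of v)⁻¹}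

/-- The right-angled Artin group of a simplicial graph `G`. -/
abbrev RAAG {V : Type*} (G : SimpleGraph V) := PresentedGroup (raagRels G)

/-- The generator of `RAAG G` corresponding to a vertex. -/
def gen {V : Type*} (G : SimpleGraph V) (v : V) : RAAG G := PresentedGroup.of v

/-- The star of a vertex: the vertex together with its neighbours. -/
def star {V : Type*} (G : SimpleGraph V) (v : V) : Set V := insert v (G.neighborSet v)

/-- `a ≤ b` : the link of `a` is contained in the star of `b`. -/
def LkLeSt {V : Type*} (G : SimpleGraph V) (a b : V) : Prop := G.neighborSet a ⊆ star G b

/-- The complement of the star of `v`. -/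
def stComp {V : Type*} (G : SimpleGraph V) (v : V) : Set V := (star G v)ᶜ

/-- `C` is (the vertex set of) a connected component of `Γ − st(v)`. -/
def IsCompOf {V : Type*} (G : SimpleGraph V) (v : V) (C : Set V) : Prop :=
  ∃ c : (G.induce (stComp G v)).ConnectedComponent, C = Subtype.val '' c.supp

/-- `C` is (the vertex set of) a connected component of `Γ`. -/
def IsGraphComp {V : Type*} (G : SimpleGraph V) (C : Set V) : Prop :=
  ∃ c : G.ConnectedComponent, C = c.supp

/-- `φ` is the right transvection `R_{ab} : a ↦ ab`, fixing all other generators. -/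
def IsRT {V : Type*} {G : SimpleGraph V} (φ : MulAut (RAAG G)) (a b : V) : Prop :=
  φ (gen G a) = gen G a * gen G b ∧ ∀ w ≠ a, φ (gen G w) = gen G w

/-- `φ` is the left transvection `L_{ab} : a ↦ ba`, fixing all other generators. -/
def IsLT {V : Type*} {G : SimpleGraph V} (φ : MulAut (RAAG G)) (a b : V) : Prop :=
  φ (gen G a) = gen G b * gen G a ∧ ∀ w ≠ a, φ (gen G w) = gen G w

/-- `φ` is the partial conjugation `P_v^C`, conjugating every vertex of `C` by `v`
and fixing all other generators. -/
def IsPC {V : Type*} {G : SimpleGraph V} (φ : MulAut (RAAG G)) (v : V) (C : Set V) : Prop :=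
  (∀ w ∈ C, φ (gen G w) = gen G v * gen G w * (gen G v)⁻¹) ∧
  ∀ w ∉ C, φ (gen G w) = gen G w

theorem mem_star_comm {V : Type*} {G : SimpleGraph V} {x y : V} :
    x ∈ star G y ↔ y ∈ star G x := by
  simp only [_root_.star, Set.mem_insert_iff, SimpleGraph.mem_neighborSet, eq_comm, G.adj_comm]

theorem statement2_general {V : Type*} (G : SimpleGraph V) (a b c : V)
    (h1 : LkLeSt G a b) (h2 : LkLeSt G b c) : LkLeSt G a c := by
  intro x hax
  rcases h1 hax with rfl | hbx
  · rcases mem_star_comm.1 (h2 (G.adj_symm hax)) with rfl | hac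
    · exact Or.inr hax
    · exact mem_star_comm.1 (h1 hac)
  · exact h2 hbx

/-- the relation `lk(a) ⊆ st(b)` on vertices is transitive. -/
theorem statement2 {V : Type*} [Fintype V] [DecidableEq V] (G : SimpleGraph V) (a b c : V)
    (h1 : LkLeSt G a b) (h2 : LkLeSt G b c) : LkLeSt G a c :=
  statement2_general G a b c h1 h2
end

section
/- Let a, b, d be vertices of Γ with a ≤ b and a ≤ d. Then the right transvection R_{ab} (a ↦ ab) and the left transvection L_{ad} (a ↦ da) commute in Aut(A_Γ). -/
theorem PresentedGroup.mulAut_ext {α : Type*} {rels : Set (FreeGroup α)}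
    {φ ψ : MulAut (PresentedGroup rels)} (h : ∀ x, φ (.of x) = ψ (.of x)) : φ = ψ :=
  MulEquiv.toMonoidHom_injective (PresentedGroup.ext h)

theorem statement6_general {V : Type*} (G : SimpleGraph V) (a b d : V)
    (hab : a ≠ b) (had : a ≠ d)
    (R L : MulAut (RAAG G)) (hR : IsRT R a b) (hL : IsLT L a d) :
    R * L = L * R := by
  refine PresentedGroup.mulAut_ext fun v => ?_
  change R (L (gen G v)) = L (R (gen G v))
  by_cases hv : v = a
  · -- both sides send `a` to `d a b`
    subst hv
    rw [hL.1, hR.1, map_mul, map_mul, hR.2 d (Ne.symm had), hL.2 b (Ne.symm hab), hR.1, hL.1,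
      mul_assoc]
  · rw [hL.2 v hv, hR.2 v hv, hL.2 v hv]

/-- if `a ≤ b` and `a ≤ d`, then `R_{ab}` and `L_{ad}` commute in `Aut(A_Γ)`. -/
theorem statement6 {V : Type*} [Fintype V] [DecidableEq V] (G : SimpleGraph V) (a b d : V)
    (hab : a ≠ b) (had : a ≠ d) (h1 : LkLeSt G a b) (h2 : LkLeSt G a d)
    (R L : MulAut (RAAG G)) (hR : IsRT R a b) (hL : IsLT L a d) :
    R * L = L * R :=
  statement6_general G a b d hab had R L hR hL
end

section
/- Let a ≤ b be distinct vertices of Γ and let C be a connected component of Γ − st(b). Then the transvection R_{ab} and the partial conjugation P_b^C commute in Aut(A_Γ). -/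
/-! Both automorphisms are determined by their values on the generators, so it suffices to compare
`R ∘ P` and `P ∘ R` on each vertex. Since `b ∉ C`, both fix `b`; the only nontrivial case is
`a ∈ C`, where both composites send `a` to `b a`. -/

theorem IsCompOf.notMem {V : Type*} {G : SimpleGraph V} {b : V} {C : Set V}
    (hC : IsCompOf G b C) : b ∉ C := by
  obtain ⟨c, rfl⟩ := hC
  rintro ⟨⟨x, hx⟩, -, hxb : x = b⟩
  exact hx (hxb ▸ Set.mem_insert x _)

theorem RAAG.mulAut_ext {V : Type*} {G : SimpleGraph V} {φ ψ : MulAut (RAAG G)}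
    (h : ∀ v, φ (gen G v) = ψ (gen G v)) : φ = ψ :=
  MulEquiv.toMonoidHom_injective (PresentedGroup.ext h)

theorem IsRT.commute_of_isPC {V : Type*} {G : SimpleGraph V} {a b : V} {C : Set V}
    {R P : MulAut (RAAG G)} (hR : IsRT R a b) (hP : IsPC P b C) (hab : a ≠ b) (hbC : b ∉ C) :
    Commute R P := by
  obtain ⟨hRa, hRo⟩ := hR
  obtain ⟨hPC, hPo⟩ := hP
  have hRb : R (gen G b) = gen G b := hRo b hab.symm
  have hPb : P (gen G b) = gen G b := hPo b hbC
  refine RAAG.mulAut_ext fun v => ?_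
  simp only [MulAut.mul_apply]
  by_cases hvC : v ∈ C
  · rw [hPC v hvC, map_mul, map_mul, map_inv, hRb]
    by_cases hva : v = a
    · subst hva
      rw [hRa, map_mul, hPC v hvC, hPb]
      group
    · rw [hRo v hva, hPC v hvC]
  · by_cases hva : v = a
    · subst hva
      rw [hPo v hvC, hRa, map_mul, hPo v hvC, hPb]
    · rw [hPo v hvC, hRo v hva, hPo v hvC]

theorem statement7_general {V : Type*} (G : SimpleGraph V) (a b : V)
    (hab : a ≠ b) (C : Set V) (hC : IsCompOf G b C)
    (R P : MulAut (RAAG G)) (hR : IsRT R a b) (hP : IsPC P b C) :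
    R * P = P * R :=
  hR.commute_of_isPC hP hab hC.notMem

/-- if `a ≤ b` are distinct and `C` is a connected component of `Γ − st(b)`,
then `R_{ab}` and `P_b^C` commute in `Aut(A_Γ)`. -/
theorem statement7 {V : Type*} [Fintype V] [DecidableEq V] (G : SimpleGraph V) (a b : V)
    (hab : a ≠ b) (hle : LkLeSt G a b) (C : Set V) (hC : IsCompOf G b C)
    (R P : MulAut (RAAG G)) (hR : IsRT R a b) (hP : IsPC P b C) :
    R * P = P * R :=
  statement7_general G a b hab C hC R P hR hP
end

section
/- Let a and b be adjacent vertices of Γ, and let C be a component of Γ − st(a) and D a component of Γ − st(b). Then the partial conjugations P_a^C and P_b^D commute in Aut(A_Γ). -/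
/-!
Each partial conjugation sends a generator `w` to `s * w * s⁻¹` with `s` a power of its
conjugating vertex. Since `b ∉ C` and `a ∉ D` (adjacent vertices lie in each other's star),
`P_a^C` fixes `b` and `P_b^D` fixes `a`, so both composites send `w` to `w` conjugated by the
product of the two conjugators, and these commute because `a` and `b` do.
-/

namespace RAAG

variable {V : Type*} {G : SimpleGraph V}

theorem mulAut_ext_s9 {φ ψ : MulAut (RAAG G)} (h : ∀ v, φ (gen G v) = ψ (gen G v)) : φ = ψ :=
  MulEquiv.toMonoidHom_injective <| PresentedGroup.ext h

theorem commute_gen_of_adj {a b : V} (hab : G.Adj a b) : Commute (gen G a) (gen G b) := by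
  rw [← commutatorElement_eq_one_iff_commute, gen, gen, PresentedGroup.of, PresentedGroup.of,
    ← map_commutatorElement]
  exact PresentedGroup.one_of_mem ⟨a, b, hab, rfl⟩

end RAAG

theorem IsCompOf.notMem_of_adj {V : Type*} {G : SimpleGraph V} {v w : V} {C : Set V}
    (hC : IsCompOf G v C) (hvw : G.Adj v w) : w ∉ C := by
  obtain ⟨c, rfl⟩ := hC
  rintro ⟨x, -, rfl⟩
  exact x.2 (Set.mem_insert_of_mem v hvw)

namespace IsPC

variable {V : Type*} {G : SimpleGraph V} {P Q : MulAut (RAAG G)} {a b : V} {C D : Set V}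

theorem exists_pow_conj (hP : IsPC P a C) (w : V) :
    ∃ n : ℕ, P (gen G w) = gen G a ^ n * gen G w * (gen G a ^ n)⁻¹ := by
  by_cases hw : w ∈ C
  · exact ⟨1, by rw [pow_one, hP.1 w hw]⟩
  · exact ⟨0, by rw [pow_zero, one_mul, inv_one, mul_one, hP.2 w hw]⟩

theorem commute (hP : IsPC P a C) (hQ : IsPC Q b D) (hbC : b ∉ C) (haD : a ∉ D)
    (hab : Commute (gen G a) (gen G b)) : Commute P Q := by
  refine RAAG.mulAut_ext_s9 fun w => ?_
  obtain ⟨m, hPw⟩ := hP.exists_pow_conj w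
  obtain ⟨n, hQw⟩ := hQ.exists_pow_conj w
  set s := gen G a ^ m
  set t := gen G b ^ n
  have hPt : P t = t := by rw [map_pow, hP.2 b hbC]
  have hQs : Q s = s := by rw [map_pow, hQ.2 a haD]
  calc P (Q (gen G w)) = (t * s) * gen G w * (t * s)⁻¹ := by
        rw [hQw, map_mul, map_mul, map_inv, hPt, hPw]; group
    _ = (s * t) * gen G w * (s * t)⁻¹ := by rw [(hab.pow_pow m n).eq]
    _ = Q (P (gen G w)) := by
        rw [hPw, map_mul, map_mul, map_inv, hQs, hQw]; group

end IsPC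

theorem statement9_general {V : Type*} (G : SimpleGraph V) (a b : V)
    (hadj : G.Adj a b) (C D : Set V) (hC : IsCompOf G a C) (hD : IsCompOf G b D)
    (P Q : MulAut (RAAG G)) (hP : IsPC P a C) (hQ : IsPC Q b D) :
    P * Q = Q * P :=
  (hP.commute hQ (hC.notMem_of_adj hadj) (hD.notMem_of_adj hadj.symm)
    (RAAG.commute_gen_of_adj hadj)).eq

/-- if `a` and `b` are adjacent, `C` is a component of `Γ − st(a)` and `D` a
component of `Γ − st(b)`, then `P_a^C` and `P_b^D` commute in `Aut(A_Γ)`. -/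
theorem statement9 {V : Type*} [Fintype V] [DecidableEq V] (G : SimpleGraph V) (a b : V)
    (hadj : G.Adj a b) (C D : Set V) (hC : IsCompOf G a C) (hD : IsCompOf G b D)
    (P Q : MulAut (RAAG G)) (hP : IsPC P a C) (hQ : IsPC Q b D) :
    P * Q = Q * P :=
  statement9_general G a b hadj C D hC hD P Q hP hQ
end

section
/- Let a and b be vertices of Γ, let D be a component of Γ − st(a) and D' a component of Γ − st(b). If D ∩ D' = ∅, b ∉ D, and a ∉ D', then the partial conjugations P_a^D and P_b^{D'} commute in Aut(A_Γ). -/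
namespace IsPC

variable {V : Type*} {G : SimpleGraph V} {φ : MulAut (RAAG G)} {v : V} {C : Set V}

theorem map_conj_of_notMem (hφ : IsPC φ v C) {u w : V} (hu : u ∉ C) (hw : w ∉ C) :
    φ (gen G u * gen G w * (gen G u)⁻¹) = gen G u * gen G w * (gen G u)⁻¹ := by
  rw [map_mul, map_mul, map_inv, hφ.2 u hu, hφ.2 w hw]

theorem commute_apply_gen (hφ : IsPC φ v C) {ψ : MulAut (RAAG G)} {u : V} {C' : Set V}
    (hψ : IsPC ψ u C') (hvC' : v ∉ C') {w : V} (hw : w ∈ C) (hwC' : w ∉ C') :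
    φ (ψ (gen G w)) = ψ (φ (gen G w)) := by
  rw [hψ.2 w hwC', hφ.1 w hw, hψ.map_conj_of_notMem hvC' hwC']

end IsPC

theorem statement10_general {V : Type*} (G : SimpleGraph V) (a b : V)
    (D D' : Set V)
    (hdisj : D ∩ D' = ∅) (hbD : b ∉ D) (haD' : a ∉ D')
    (P Q : MulAut (RAAG G)) (hP : IsPC P a D) (hQ : IsPC Q b D') :
    P * Q = Q * P := by
  refine RAAG.mulAut_ext fun w => ?_
  simp only [MulAut.mul_apply]
  by_cases hw : w ∈ D
  · exact hP.commute_apply_gen hQ haD' hw fun hw' => hdisj.subset ⟨hw, hw'⟩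
  by_cases hw' : w ∈ D'
  · exact (hQ.commute_apply_gen hP hbD hw' hw).symm
  · rw [hQ.2 w hw', hP.2 w hw, hQ.2 w hw']

/-- if `D` is a component of `Γ − st(a)`, `D'` a component of `Γ − st(b)`,
with `D ∩ D' = ∅`, `b ∉ D` and `a ∉ D'`, then `P_a^D` and `P_b^{D'}` commute. -/
theorem statement10 {V : Type*} [Fintype V] [DecidableEq V] (G : SimpleGraph V) (a b : V)
    (D D' : Set V) (hD : IsCompOf G a D) (hD' : IsCompOf G b D')
    (hdisj : D ∩ D' = ∅) (hbD : b ∉ D) (haD' : a ∉ D')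
    (P Q : MulAut (RAAG G)) (hP : IsPC P a D) (hQ : IsPC Q b D') :
    P * Q = Q * P :=
  statement10_general G a b D D' hdisj hbD haD' P Q hP hQ
end

section
/- Let a, b, c be vertices of Γ with a ≤ b ≤ c (i.e. lk(a) ⊆ st(b) and lk(b) ⊆ st(c)) where a, b, c are pairwise distinct. Then the transvections L_{ac} (a ↦ ca) and R_{bc} (b ↦ bc) commute in Aut(A_Γ). -/
theorem statement19_general {V : Type*} (G : SimpleGraph V) (a b c : V)
    (hab : a ≠ b) (hac : a ≠ c) (hbc : b ≠ c)
    (L R : MulAut (RAAG G)) (hL : IsLT L a c) (hR : IsRT R b c) :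
    L * R = R * L := by
  obtain ⟨hLa, hLo⟩ := hL
  obtain ⟨hRb, hRo⟩ := hR
  -- `L` fixes `b` and `c`, `R` fixes `a` and `c`: both composites send `a ↦ ca`, `b ↦ bc`.
  refine RAAG.mulAut_ext fun x => ?_
  simp only [MulAut.mul_apply]
  rcases eq_or_ne a x with rfl | hax
  · rw [hRo a hab, hLa, map_mul, hRo c hbc.symm, hRo a hab]
  rcases eq_or_ne b x with rfl | hbx
  · rw [hLo b hab.symm, hRb, map_mul, hLo b hab.symm, hLo c hac.symm]
  rw [hRo x hbx.symm, hLo x hax.symm, hRo x hbx.symm]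

/-- if `a, b, c` are pairwise distinct with `a ≤ b ≤ c`, then `L_{ac}` and
`R_{bc}` commute in `Aut(A_Γ)`. -/
theorem statement19 {V : Type*} [Fintype V] [DecidableEq V] (G : SimpleGraph V) (a b c : V)
    (hab : a ≠ b) (hac : a ≠ c) (hbc : b ≠ c)
    (h1 : LkLeSt G a b) (h2 : LkLeSt G b c)
    (L R : MulAut (RAAG G)) (hL : IsLT L a c) (hR : IsRT R b c) :
    L * R = R * L :=
  statement19_general G a b c hab hac hbc L R hL hR
end
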